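/- For all n ≥ 2 and all 1 ≤ j ≤ n-1, 3·a(n-1,j)/b(n-1,j) ≤ θ(n), with equality when j = n-1. Hence max_{1 ≤ j ≤ n-1} 3·a(n-1,j)/b(n-1,j) = θ(n). -/

import Mathlib

/-- `F n = (a n ·, b n ·, φ n)` from the recursive construction;
    `φ 1 := 1` by convention. -/
def F : ℕ → ((ℕ → ℚ) × (ℕ → ℚ) × ℚ)
  | 0 => (fun _ => 0, fun _ => 0, 1)
  | 1 => (fun j => if j = 1 then 1 else 0, fun j => if j = 1 then 1 else 0, 1)
  | (n+2) =>
      let p := F (n+1)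
      let th : ℚ := 3 * p.1 (n+1)
      let ph : ℚ := if n = 0 then 4
        else 4 * ∑ j ∈ Finset.Icc 1 (n+1), (th * p.2.1 j - 3 * p.1 j)
      (fun j => if j = n+2 then ph else 4 * p.1 j,
       fun j => if j = n+2 then 1 else (1 + th) * p.2.1 j,
       ph)

/-- coefficient `a(n,j)` -/
def a (n j : ℕ) : ℚ := (F n).1 j
/-- coefficient `b(n,j)` -/
def b (n j : ℕ) : ℚ := (F n).2.1 j
/-- `φ(n)` -/
def phi (n : ℕ) : ℚ := (F n).2.2
/-- `θ(n) = 3·a(n-1,n-1)` -/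
def theta (n : ℕ) : ℚ := 3 * a (n-1) (n-1)

/-!
The proof carries the stronger invariant `2 a(m,j) ≤ a(m,m) b(m,j)` for `j < m`, together with
`a(m,m) ≥ 1` and `b(m,j) ≥ 1`. The factor `2` keeps the summands of `φ(m+1)` away from `0`, which
gives `φ(m+1) ≥ 4`; then `φ(m+1) (1 + θ(m+1)) ≥ 4 + 12 a(m,m) ≥ 8 a(m,m)` absorbs the factors
`4` and `2` introduced by one step of the recursion.
-/

open Finset

lemma a_succ_succ_self (k : ℕ) : a (k + 2) (k + 2) = phi (k + 2) := by
  simp [a, phi, F]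

lemma a_succ_succ_of_ne {k j : ℕ} (hj : j ≠ k + 2) : a (k + 2) j = 4 * a (k + 1) j := by
  simp [a, F, hj]

lemma b_succ_succ_self (k : ℕ) : b (k + 2) (k + 2) = 1 := by
  simp [b, F]

lemma b_succ_succ_of_ne {k j : ℕ} (hj : j ≠ k + 2) :
    b (k + 2) j = (1 + 3 * a (k + 1) (k + 1)) * b (k + 1) j := by
  simp [a, b, F, hj]

lemma phi_two : phi 2 = 4 := by
  simp [phi, F]

lemma phi_add_three (k : ℕ) :
    phi (k + 3) = 4 * ∑ j ∈ Icc 1 (k + 2), (3 * a (k + 2) (k + 2) * b (k + 2) j - 3 * a (k + 2) j) := by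
  simp [a, b, phi, F]

lemma a_one_one : a 1 1 = 1 := by
  simp [a, F]

lemma b_one_one : b 1 1 = 1 := by
  simp [b, F]

lemma b_self {m : ℕ} (hm : 1 ≤ m) : b m m = 1 := by
  obtain ⟨k, rfl⟩ := Nat.exists_eq_add_of_le' hm
  cases k with
  | zero => exact b_one_one
  | succ k => exact b_succ_succ_self k

def LevelBound (m : ℕ) : Prop :=
  1 ≤ a m m ∧ (∀ j ∈ Icc 1 m, 1 ≤ b m j) ∧ ∀ j ∈ Ico 1 m, 2 * a m j ≤ a m m * b m j

lemma levelBound_one : LevelBound 1 :=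
  ⟨a_one_one.ge, by simp [b_one_one], by simp⟩

lemma LevelBound.a_le_mul_b {m : ℕ} (h : LevelBound m) {j : ℕ} (hj : j ∈ Icc 1 m) :
    a m j ≤ a m m * b m j := by
  obtain ⟨hA, hb, hratio⟩ := h
  rcases (mem_Icc.mp hj).2.eq_or_lt with rfl | hlt
  · rw [b_self (mem_Icc.mp hj).1, mul_one]
  · have := hratio j (mem_Ico.mpr ⟨(mem_Icc.mp hj).1, hlt⟩)
    nlinarith [hb j hj]

lemma LevelBound.four_le_phi {k : ℕ} (h : LevelBound (k + 1)) : 4 ≤ phi (k + 2) := by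
  cases k with
  | zero => exact phi_two.ge
  | succ k =>
    obtain ⟨hA, hb, hratio⟩ := id h
    have h1 : 1 ∈ Icc 1 (k + 2) := by simp
    have hsummand_nonneg : ∀ j ∈ Icc 1 (k + 2),
        0 ≤ 3 * a (k + 2) (k + 2) * b (k + 2) j - 3 * a (k + 2) j := fun j hj => by
      linarith [h.a_le_mul_b hj]
    have hsummand_one : 3 * a (k + 2) (k + 2) * b (k + 2) 1 - 3 * a (k + 2) 1 ≤
        ∑ j ∈ Icc 1 (k + 2), (3 * a (k + 2) (k + 2) * b (k + 2) j - 3 * a (k + 2) j) :=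
      single_le_sum hsummand_nonneg h1
    have := hratio 1 (by simp)
    rw [phi_add_three]
    nlinarith [hb 1 h1]

lemma LevelBound.succ {k : ℕ} (h : LevelBound (k + 1)) : LevelBound (k + 2) := by
  have hphi := h.four_le_phi
  obtain ⟨hA, hb, -⟩ := id h
  refine ⟨by rw [a_succ_succ_self]; linarith, fun j hj => ?_, fun j hj => ?_⟩
  · rcases eq_or_ne j (k + 2) with rfl | hne
    · rw [b_succ_succ_self]
    · rw [b_succ_succ_of_ne hne]
      obtain ⟨hj1, hjle⟩ := mem_Icc.mp hj
      nlinarith [hb j (mem_Icc.mpr ⟨hj1, by omega⟩)]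
  · obtain ⟨hj1, hjlt⟩ := mem_Ico.mp hj
    have hjk : j ∈ Icc 1 (k + 1) := mem_Icc.mpr ⟨hj1, by omega⟩
    have hbj := hb j hjk
    have hle := h.a_le_mul_b hjk
    rw [a_succ_succ_self, a_succ_succ_of_ne hjlt.ne, b_succ_succ_of_ne hjlt.ne]
    calc 2 * (4 * a (k + 1) j) ≤ 8 * a (k + 1) (k + 1) * b (k + 1) j := by linarith
      _ ≤ 4 * ((1 + 3 * a (k + 1) (k + 1)) * b (k + 1) j) := by nlinarith
      _ ≤ phi (k + 2) * ((1 + 3 * a (k + 1) (k + 1)) * b (k + 1) j) := by gcongr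

lemma levelBound {m : ℕ} (hm : 1 ≤ m) : LevelBound m := by
  obtain ⟨k, rfl⟩ := Nat.exists_eq_add_of_le' hm
  induction k with
  | zero => exact levelBound_one
  | succ k ih => exact (ih (by omega)).succ

theorem ratio_max (n : ℕ) (hn : 2 ≤ n) (hne : (Finset.Icc 1 (n-1)).Nonempty) :
    (∀ j ∈ Finset.Icc 1 (n-1), 3 * a (n-1) j / b (n-1) j ≤ theta n) ∧
    3 * a (n-1) (n-1) / b (n-1) (n-1) = theta n ∧
    (Finset.Icc 1 (n-1)).sup' hne (fun j => 3 * a (n-1) j / b (n-1) j) = theta n := by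
  have hm : 1 ≤ n - 1 := by omega
  have hbound := levelBound hm
  have hle : ∀ j ∈ Icc 1 (n - 1), 3 * a (n - 1) j / b (n - 1) j ≤ theta n := fun j hj => by
    rw [div_le_iff₀ (by linarith [hbound.2.1 j hj]), theta]
    linarith [hbound.a_le_mul_b hj]
  have heq : 3 * a (n - 1) (n - 1) / b (n - 1) (n - 1) = theta n := by
    rw [b_self hm, div_one, theta]
  refine ⟨hle, heq, le_antisymm (sup'_le hne _ hle) ?_⟩
  exact heq ▸ le_sup' (fun j => 3 * a (n - 1) j / b (n - 1) j) (right_mem_Icc.mpr hm)
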